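/- arXiv:0906.0478 — 2 statements merged into one kernel-verified Lean document; each statement's English description precedes it below -/
import Mathlib

section
/- Let U be a connected smooth real manifold and let l₁, m₁, …, lₙ, mₙ: U → ℂ* be smooth nowhere-vanishing complex-valued functions and ε(i) ∈ {±1} such that the complex 2-form Σᵢ ε(i) (dlᵢ/lᵢ) ∧ (dmᵢ/mᵢ) vanishes identically on U. Then the real 1-form η = Σᵢ ε(i) (log|lᵢ| d(arg mᵢ) − log|mᵢ| d(arg lᵢ)) is closed on U. -/
open Complex

lemma eta_aux {E : Type} [NormedAddCommGroup E] [NormedSpace ℝ E]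
    {U : Set E} (hU : IsOpen U) {f : E → ℂ}
    (hf : ContDiffOn ℝ (⊤ : ℕ∞) f U) (hf0 : ∀ y ∈ U, f y ≠ 0) {x : E} (hx : x ∈ U) :
    ∃ (D : E → E →L[ℝ] ℂ) (Λ : E →L[ℝ] ℝ),
      (∀ v w, D v w = D w v) ∧
      (∀ v, HasFDerivAt (fun y => fderiv ℝ f y v / f y) (D v) x) ∧
      (∀ w, Λ w = (fderiv ℝ f x w / f x).re) ∧
      HasFDerivAt (fun y => Real.log (‖f y‖)) Λ x := by
  set F : E → E →L[ℝ] ℂ := fderiv ℝ f with hF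
  have hfx0 : f x ≠ 0 := hf0 x hx
  have h1 : ∀ y ∈ U, HasFDerivAt f (F y) y := fun y hy =>
    ((hf.differentiableOn (by simp)) y hy).differentiableAt (hU.mem_nhds hy) |>.hasFDerivAt
  have hfx : HasFDerivAt f (F x) x := h1 x hx
  have hFC : ContDiffAt ℝ (⊤ : ℕ∞) F x := by
    have := (hf.contDiffAt (hU.mem_nhds hx)).fderiv_right (m := (⊤ : ℕ∞)) (by simp)
    exact this
  have hFd : DifferentiableAt ℝ F x := hFC.differentiableAt (by simp)
  set f'' : E →L[ℝ] E →L[ℝ] ℂ := fderiv ℝ F x with hf''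
  have hF' : HasFDerivAt F f'' x := hFd.hasFDerivAt
  have hsym : ∀ v w, f'' v w = f'' w v := by
    intro v w
    exact second_derivative_symmetric_of_eventually
      (Filter.eventually_of_mem (hU.mem_nhds hx) h1) hF' v w
  -- derivative of y ↦ (f y)⁻¹
  have hinv : HasFDerivAt (fun y => (f y)⁻¹)
      ((-(ContinuousLinearMap.mulLeftRight ℝ ℂ (f x)⁻¹ (f x)⁻¹)).comp (F x)) x :=
    (hasFDerivAt_inv' (𝕜 := ℝ) hfx0).comp x hfx
  -- derivative of log |f|
  have hre : HasFDerivAt (fun y => (f y).re) (Complex.reCLM.comp (F x)) x :=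
    Complex.reCLM.hasFDerivAt.comp x hfx
  have him : HasFDerivAt (fun y => (f y).im) (Complex.imCLM.comp (F x)) x :=
    Complex.imCLM.hasFDerivAt.comp x hfx
  set Rc : E →L[ℝ] ℝ := Complex.reCLM.comp (F x)
  set Ic : E →L[ℝ] ℝ := Complex.imCLM.comp (F x)
  have hN : HasFDerivAt (fun y => Complex.normSq (f y))
      (((f x).re • Rc + (f x).re • Rc) + ((f x).im • Ic + (f x).im • Ic)) x := by
    have : (fun y => Complex.normSq (f y))
        = fun y => (f y).re * (f y).re + (f y).im * (f y).im := by
      funext y; rw [Complex.normSq_apply]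
    rw [this]
    exact (hre.mul hre).add (him.mul him)
  have hN0 : Complex.normSq (f x) ≠ 0 := (Complex.normSq_pos.mpr hfx0).ne'
  have hlog : HasFDerivAt (fun y => Real.log (Complex.normSq (f y)) / 2)
      ((2:ℝ)⁻¹ • ((Complex.normSq (f x))⁻¹ •
        (((f x).re • Rc + (f x).re • Rc) + ((f x).im • Ic + (f x).im • Ic)))) x := by
    have h2 : (fun y => Real.log (Complex.normSq (f y)) / 2)
        = fun y => (2:ℝ)⁻¹ * Real.log (Complex.normSq (f y)) := by
      funext y; ring
    rw [h2]
    exact (hN.log hN0).const_mul _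
  have hLabs : (fun y => Real.log (‖f y‖))
      = fun y => Real.log (Complex.normSq (f y)) / 2 := by
    funext y; rw [Complex.norm_def, Real.log_sqrt (Complex.normSq_nonneg _)]
  refine ⟨fun v => ((F x) v) • ((-(ContinuousLinearMap.mulLeftRight ℝ ℂ (f x)⁻¹ (f x)⁻¹)).comp (F x))
      + (f x)⁻¹ • ((F x).comp (0 : E →L[ℝ] E) + f''.flip v),
      (2:ℝ)⁻¹ • ((Complex.normSq (f x))⁻¹ •
        (((f x).re • Rc + (f x).re • Rc) + ((f x).im • Ic + (f x).im • Ic))), ?_, ?_, ?_, ?_⟩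
  · intro v w
    simp only [ContinuousLinearMap.add_apply, ContinuousLinearMap.smul_apply,
      ContinuousLinearMap.comp_apply, ContinuousLinearMap.neg_apply,
      ContinuousLinearMap.mulLeftRight_apply, ContinuousLinearMap.flip_apply,
      ContinuousLinearMap.zero_apply, map_zero, smul_eq_mul]
    rw [hsym w v]
    ring
  · intro v
    have hc : HasFDerivAt (fun y => F y v) ((F x).comp (0 : E →L[ℝ] E) + f''.flip v) x :=
      hF'.clm_apply (hasFDerivAt_const v x)
    have := hc.mul hinv
    simpa only [div_eq_mul_inv, Pi.mul_def] using this
  · intro w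
    simp only [ContinuousLinearMap.smul_apply, ContinuousLinearMap.add_apply,
      ContinuousLinearMap.comp_apply, Complex.reCLM_apply, Complex.imCLM_apply,
      smul_eq_mul, Rc, Ic, Complex.div_re]
    field_simp
    ring
  · rw [hLabs]; exact hlog

/-- Let `U` be a connected open set in a real normed space and let
`l₁, m₁, …, lₙ, mₙ : U → ℂ*` be smooth nowhere-vanishing functions and `ε i ∈ {±1}` with
`Σᵢ ε i (dlᵢ/lᵢ) ∧ (dmᵢ/mᵢ) = 0` on `U`. Then the real 1-form
`η = Σᵢ ε i (log|lᵢ| d(arg mᵢ) − log|mᵢ| d(arg lᵢ))` is closed on `U`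
(here `d(arg f) = Im(df/f)`). -/
theorem eta_closed_of_wedge_vanishes
    {E : Type} [NormedAddCommGroup E] [NormedSpace ℝ E]
    (U : Set E) (hUopen : IsOpen U) (hUconn : IsConnected U)
    (n : ℕ) (l m : Fin n → E → ℂ) (ε : Fin n → ℤ) (hε : ∀ i, ε i = 1 ∨ ε i = -1)
    (hl : ∀ i, ContDiffOn ℝ (⊤ : ℕ∞) (l i) U) (hm : ∀ i, ContDiffOn ℝ (⊤ : ℕ∞) (m i) U)
    (hl0 : ∀ i, ∀ x ∈ U, l i x ≠ 0) (hm0 : ∀ i, ∀ x ∈ U, m i x ≠ 0)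
    (hwedge : ∀ x ∈ U, ∀ v w : E,
      ∑ i, (ε i : ℂ) *
        ((fderiv ℝ (l i) x v / l i x) * (fderiv ℝ (m i) x w / m i x) -
         (fderiv ℝ (l i) x w / l i x) * (fderiv ℝ (m i) x v / m i x)) = 0) :
    ∀ x ∈ U, ∀ v w : E,
      fderiv ℝ (fun y => ∑ i, (ε i : ℝ) *
          (Real.log (‖l i y‖) * (fderiv ℝ (m i) y v / m i y).im -
           Real.log (‖m i y‖) * (fderiv ℝ (l i) y v / l i y).im)) x w =
      fderiv ℝ (fun y => ∑ i, (ε i : ℝ) *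
          (Real.log (‖l i y‖) * (fderiv ℝ (m i) y w / m i y).im -
           Real.log (‖m i y‖) * (fderiv ℝ (l i) y w / l i y).im)) x v := by
  intro x hx v w
  choose Dl Λl hDlsym hDl hΛl hLl using fun i => eta_aux hUopen (hl i) (hl0 i) hx
  choose Dm Λm hDmsym hDm hΛm hLm using fun i => eta_aux hUopen (hm i) (hm0 i) hx
  have hder : ∀ u : E, HasFDerivAt (fun y => ∑ i, (ε i : ℝ) *
          (Real.log (‖l i y‖) * (fderiv ℝ (m i) y u / m i y).im -
           Real.log (‖m i y‖) * (fderiv ℝ (l i) y u / l i y).im))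
      (∑ i, (ε i : ℝ) •
        ((Real.log (‖l i x‖) • (Complex.imCLM.comp (Dm i u))
            + (fderiv ℝ (m i) x u / m i x).im • Λl i)
         - (Real.log (‖m i x‖) • (Complex.imCLM.comp (Dl i u))
            + (fderiv ℝ (l i) x u / l i x).im • Λm i))) x := by
    intro u
    apply HasFDerivAt.fun_sum
    intro i _
    have hPm : HasFDerivAt (fun y => (fderiv ℝ (m i) y u / m i y).im)
        (Complex.imCLM.comp (Dm i u)) x := Complex.imCLM.hasFDerivAt.comp x (hDm i u)
    have hPl : HasFDerivAt (fun y => (fderiv ℝ (l i) y u / l i y).im)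
        (Complex.imCLM.comp (Dl i u)) x := Complex.imCLM.hasFDerivAt.comp x (hDl i u)
    exact (((hLl i).mul hPm).sub ((hLm i).mul hPl)).const_mul _
  rw [(hder v).fderiv, (hder w).fderiv]
  simp only [ContinuousLinearMap.sum_apply, ContinuousLinearMap.smul_apply,
    ContinuousLinearMap.add_apply, ContinuousLinearMap.sub_apply,
    ContinuousLinearMap.comp_apply, Complex.imCLM_apply, smul_eq_mul]
  have key : ∑ i, (ε i : ℝ) *
      ((fderiv ℝ (l i) x w / l i x) * (fderiv ℝ (m i) x v / m i x) -
       (fderiv ℝ (l i) x v / l i x) * (fderiv ℝ (m i) x w / m i x)).im = 0 := by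
    have h := congrArg Complex.im (hwedge x hx w v)
    rw [Complex.im_sum] at h
    simpa only [Complex.mul_im, Complex.intCast_re, Complex.intCast_im, zero_mul,
      add_zero, Complex.zero_im] using h
  rw [← sub_eq_zero, ← Finset.sum_sub_distrib, ← key]
  apply Finset.sum_congr rfl
  intro i _
  rw [hDmsym i v w, hDlsym i v w, hΛl i w, hΛl i v, hΛm i w, hΛm i v]
  simp only [Complex.sub_im, Complex.mul_im]
  ring
end

section
/- Let U be a connected smooth manifold and l₁, m₁, …, lₙ, mₙ: U → ℂ* smooth functions with ε(i) ∈ {±1} such that Σᵢ ε(i) (dlᵢ/lᵢ) ∧ (dmᵢ/mᵢ) = 0 on U. Then the real 1-form ξ = −Σᵢ ε(i) (log|mᵢ| d log|lᵢ| + arg(lᵢ) d arg(mᵢ)) is closed on U, where arg(lᵢ) denotes any local branch of the argument (the 2-form d(arg lᵢ) ∧ d(arg mᵢ) is globally well-defined). -/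
open Complex

lemma logAbs_contDiffOn {E : Type} [NormedAddCommGroup E] [NormedSpace ℝ E]
    {f : E → ℂ} {s : Set E} (hf : ContDiffOn ℝ (⊤ : ℕ∞) f s) (h0 : ∀ x ∈ s, f x ≠ 0) :
    ContDiffOn ℝ (⊤ : ℕ∞) (fun y => Real.log (‖f y‖)) s := by
  have : ContDiffOn ℝ (⊤ : ℕ∞) (fun y => ‖f y‖) s := ContDiffOn.norm ℝ hf h0
  exact this.log (by simpa using h0)

lemma logDeriv_branch {E : Type} [NormedAddCommGroup E] [NormedSpace ℝ E]
    {f : E → ℂ} {α : E → ℝ} {W : Set E} (hW : IsOpen W)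
    (hf : ContDiffOn ℝ (⊤ : ℕ∞) f W) (hf0 : ∀ y ∈ W, f y ≠ 0)
    (hα : ContDiffOn ℝ (⊤ : ℕ∞) α W)
    (hbr : ∀ y ∈ W, f y = (‖f y‖ : ℂ) * Complex.exp (α y * Complex.I))
    {y : E} (hy : y ∈ W) (v : E) :
    fderiv ℝ f y v / f y =
      ((fderiv ℝ (fun z => Real.log (‖f z‖)) y v : ℝ) : ℂ)
        + (fderiv ℝ α y v : ℝ) * Complex.I := by
  set L : E → ℝ := fun z => Real.log (‖f z‖) with hLdef
  have hL : ContDiffOn ℝ (⊤ : ℕ∞) L W := logAbs_contDiffOn hf hf0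
  have hLd : DifferentiableAt ℝ L y :=
    ((hL.contDiffAt (hW.mem_nhds hy)).differentiableAt (by simp))
  have hαd : DifferentiableAt ℝ α y :=
    ((hα.contDiffAt (hW.mem_nhds hy)).differentiableAt (by simp))
  set c : E → ℂ := fun z => (L z : ℂ) + (α z : ℂ) * Complex.I with hcdef
  set C : E →L[ℝ] ℂ :=
    Complex.ofRealCLM.comp (fderiv ℝ L y)
      + Complex.I • Complex.ofRealCLM.comp (fderiv ℝ α y) with hCdef
  have hc : HasFDerivAt c C y := by
    have h1 : HasFDerivAt (fun z => (L z : ℂ)) (Complex.ofRealCLM.comp (fderiv ℝ L y)) y :=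
      Complex.ofRealCLM.hasFDerivAt.comp y hLd.hasFDerivAt
    have h2 : HasFDerivAt (fun z => (α z : ℂ)) (Complex.ofRealCLM.comp (fderiv ℝ α y)) y :=
      Complex.ofRealCLM.hasFDerivAt.comp y hαd.hasFDerivAt
    exact h1.add (h2.mul_const Complex.I)
  have hfc : ∀ z ∈ W, f z = Complex.exp (c z) := by
    intro z hz
    have habs : (‖f z‖ : ℂ) = Complex.exp ((L z : ℂ)) := by
      have h1 : Real.exp (L z) = ‖f z‖ :=
        Real.exp_log (norm_pos_iff.2 (hf0 z hz))
      rw [← Complex.ofReal_exp, h1]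
    rw [hbr z hz, habs, ← Complex.exp_add]
  have heq : f =ᶠ[nhds y] fun z => Complex.exp (c z) :=
    Filter.eventuallyEq_of_mem (hW.mem_nhds hy) hfc
  have hexp : HasFDerivAt (fun z => Complex.exp (c z)) (Complex.exp (c y) • C) y := hc.cexp
  have hfy : fderiv ℝ f y = Complex.exp (c y) • C := by
    rw [heq.fderiv_eq, hexp.fderiv]
  have hfyc : f y = Complex.exp (c y) := hfc y hy
  rw [hfy]
  simp only [ContinuousLinearMap.smul_apply, smul_eq_mul, hfyc]
  rw [mul_div_cancel_left₀ _ (Complex.exp_ne_zero _)]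
  simp [hCdef]
  ring

/-- Let `U` be a connected open set in a real normed space and
`l₁, m₁, …, lₙ, mₙ : U → ℂ*` smooth with `ε i ∈ {±1}` and
`Σᵢ ε i (dlᵢ/lᵢ) ∧ (dmᵢ/mᵢ) = 0` on `U`. Then the real 1-form
`ξ = −Σᵢ ε i (log|mᵢ| d log|lᵢ| + arg(lᵢ) d arg(mᵢ))` is closed on `U`, where `arg lᵢ`,
`arg mᵢ` are arbitrary smooth local branches `a i`, `b i` of the arguments near any point. -/
theorem xi_closed_of_wedge_vanishes
    {E : Type} [NormedAddCommGroup E] [NormedSpace ℝ E]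
    (U : Set E) (hUopen : IsOpen U) (hUconn : IsConnected U)
    (n : ℕ) (l m : Fin n → E → ℂ) (ε : Fin n → ℤ) (hε : ∀ i, ε i = 1 ∨ ε i = -1)
    (hl : ∀ i, ContDiffOn ℝ (⊤ : ℕ∞) (l i) U) (hm : ∀ i, ContDiffOn ℝ (⊤ : ℕ∞) (m i) U)
    (hl0 : ∀ i, ∀ x ∈ U, l i x ≠ 0) (hm0 : ∀ i, ∀ x ∈ U, m i x ≠ 0)
    (hwedge : ∀ x ∈ U, ∀ v w : E,
      ∑ i, (ε i : ℂ) *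
        ((fderiv ℝ (l i) x v / l i x) * (fderiv ℝ (m i) x w / m i x) -
         (fderiv ℝ (l i) x w / l i x) * (fderiv ℝ (m i) x v / m i x)) = 0)
    (x : E) (hx : x ∈ U)
    (V : Set E) (hV : V ∈ nhds x) (hVU : V ⊆ U)
    (a b : Fin n → E → ℝ)
    (ha : ∀ i, ContDiffOn ℝ (⊤ : ℕ∞) (a i) V) (hb : ∀ i, ContDiffOn ℝ (⊤ : ℕ∞) (b i) V)
    (habranch : ∀ i, ∀ y ∈ V, l i y = (‖l i y‖ : ℂ) * Complex.exp (a i y * Complex.I))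
    (hbbranch : ∀ i, ∀ y ∈ V, m i y = (‖m i y‖ : ℂ) * Complex.exp (b i y * Complex.I)) :
    ∀ v w : E,
      fderiv ℝ (fun y => -∑ i, (ε i : ℝ) *
          (Real.log (‖m i y‖) *
              fderiv ℝ (fun z => Real.log (‖l i z‖)) y v +
            a i y * fderiv ℝ (b i) y v)) x w =
      fderiv ℝ (fun y => -∑ i, (ε i : ℝ) *
          (Real.log (‖m i y‖) *
              fderiv ℝ (fun z => Real.log (‖l i z‖)) y w +
            a i y * fderiv ℝ (b i) y w)) x v := by
  intro v w
  -- the open set where everything is defined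
  set W : Set E := interior V with hWdef
  have hWopen : IsOpen W := isOpen_interior
  have hxW : x ∈ W := mem_interior_iff_mem_nhds.2 hV
  have hWV : W ⊆ V := interior_subset
  have hWU : W ⊆ U := hWV.trans hVU
  -- abbreviations
  set La : Fin n → E → ℝ := fun i z => Real.log (‖l i z‖) with hLadef
  set Lb : Fin n → E → ℝ := fun i z => Real.log (‖m i z‖) with hLbdef
  -- smoothness at x
  have hLaC : ∀ i, ContDiffAt ℝ (⊤ : ℕ∞) (La i) x := fun i =>
    (logAbs_contDiffOn (hl i) (hl0 i)).contDiffAt (hUopen.mem_nhds hx)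
  have hLbC : ∀ i, ContDiffAt ℝ (⊤ : ℕ∞) (Lb i) x := fun i =>
    (logAbs_contDiffOn (hm i) (hm0 i)).contDiffAt (hUopen.mem_nhds hx)
  have haC : ∀ i, ContDiffAt ℝ (⊤ : ℕ∞) (a i) x := fun i => (ha i).contDiffAt hV
  have hbC : ∀ i, ContDiffAt ℝ (⊤ : ℕ∞) (b i) x := fun i => (hb i).contDiffAt hV
  -- derivative of the "derivative in direction u" functions
  have hfd2 : ∀ (g : E → ℝ), ContDiffAt ℝ (⊤ : ℕ∞) g x → ∀ u : E,
      HasFDerivAt (fun y => fderiv ℝ g y u)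
        ((ContinuousLinearMap.apply ℝ ℝ u).comp (fderiv ℝ (fderiv ℝ g) x)) x := by
    intro g hg u
    have h1 : ContDiffAt ℝ (⊤ : ℕ∞) (fderiv ℝ g) x := hg.fderiv_right (by simp)
    have h2 := (h1.differentiableAt (by simp)).hasFDerivAt
    exact ((ContinuousLinearMap.apply ℝ ℝ u).hasFDerivAt).comp x h2
  -- the derivative of the 1-form coefficient
  have main : ∀ u u' : E,
      fderiv ℝ (fun y => -∑ i, (ε i : ℝ) *
          (Lb i y * fderiv ℝ (La i) y u + a i y * fderiv ℝ (b i) y u)) x u' =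
      -∑ i, (ε i : ℝ) *
          (fderiv ℝ (Lb i) x u' * fderiv ℝ (La i) x u
            + Lb i x * fderiv ℝ (fderiv ℝ (La i)) x u' u
            + fderiv ℝ (a i) x u' * fderiv ℝ (b i) x u
            + a i x * fderiv ℝ (fderiv ℝ (b i)) x u' u) := by
    intro u u'
    have hterm : ∀ i : Fin n,
        HasFDerivAt (fun y => (ε i : ℝ) *
            (Lb i y * fderiv ℝ (La i) y u + a i y * fderiv ℝ (b i) y u))
          ((ε i : ℝ) •
            ((Lb i x • ((ContinuousLinearMap.apply ℝ ℝ u).comp (fderiv ℝ (fderiv ℝ (La i)) x))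
                + fderiv ℝ (La i) x u • fderiv ℝ (Lb i) x)
              + (a i x • ((ContinuousLinearMap.apply ℝ ℝ u).comp (fderiv ℝ (fderiv ℝ (b i)) x))
                + fderiv ℝ (b i) x u • fderiv ℝ (a i) x))) x := by
      intro i
      have h1 : HasFDerivAt (Lb i) (fderiv ℝ (Lb i) x) x :=
        ((hLbC i).differentiableAt (by simp)).hasFDerivAt
      have h2 := hfd2 (La i) (hLaC i) u
      have h3 : HasFDerivAt (a i) (fderiv ℝ (a i) x) x :=
        ((haC i).differentiableAt (by simp)).hasFDerivAt
      have h4 := hfd2 (b i) (hbC i) u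
      exact ((h1.mul h2).add (h3.mul h4)).const_mul ((ε i : ℝ))
    have hsum := (HasFDerivAt.fun_sum (fun i (_ : i ∈ Finset.univ) => hterm i)).fun_neg
    rw [hsum.fderiv]
    simp only [ContinuousLinearMap.neg_apply, ContinuousLinearMap.coe_sum',
      Finset.sum_apply, ContinuousLinearMap.smul_apply, ContinuousLinearMap.add_apply,
      ContinuousLinearMap.comp_apply, ContinuousLinearMap.apply_apply, smul_eq_mul]
    congr 1
    apply Finset.sum_congr rfl
    intro i _
    ring
  rw [main v w, main w v]
  -- symmetry of second derivatives
  have hsymLa : ∀ i, fderiv ℝ (fderiv ℝ (La i)) x w v = fderiv ℝ (fderiv ℝ (La i)) x v w :=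
    fun i => ((hLaC i).isSymmSndFDerivAt (by norm_num; exact WithTop.coe_le_coe.2 le_top)) w v
  have hsymb : ∀ i, fderiv ℝ (fderiv ℝ (b i)) x w v = fderiv ℝ (fderiv ℝ (b i)) x v w :=
    fun i => ((hbC i).isSymmSndFDerivAt (by norm_num; exact WithTop.coe_le_coe.2 le_top)) w v
  -- identities between real and complex log-derivatives, at x
  have hlder : ∀ i u, fderiv ℝ (l i) x u / l i x =
      ((fderiv ℝ (La i) x u : ℝ) : ℂ) + (fderiv ℝ (a i) x u : ℝ) * Complex.I := fun i u =>
    logDeriv_branch hWopen ((hl i).mono hWU) (fun y hy => hl0 i y (hWU hy))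
      ((ha i).mono hWV) (fun y hy => habranch i y (hWV hy)) hxW u
  have hmder : ∀ i u, fderiv ℝ (m i) x u / m i x =
      ((fderiv ℝ (Lb i) x u : ℝ) : ℂ) + (fderiv ℝ (b i) x u : ℝ) * Complex.I := fun i u =>
    logDeriv_branch hWopen ((hm i).mono hWU) (fun y hy => hm0 i y (hWU hy))
      ((hb i).mono hWV) (fun y hy => hbbranch i y (hWV hy)) hxW u
  -- real part of the wedge hypothesis
  have hre := congrArg Complex.re (hwedge x hx v w)
  rw [Complex.re_sum] at hre
  simp only [hlder, hmder] at hre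
  simp only [Complex.zero_re, Complex.mul_re, Complex.sub_re, Complex.sub_im,
    Complex.add_re, Complex.add_im, Complex.mul_im, Complex.ofReal_re, Complex.ofReal_im,
    Complex.I_re, Complex.I_im, Complex.intCast_re, Complex.intCast_im] at hre
  -- finish by algebra
  rw [neg_eq_iff_eq_neg, neg_neg, ← sub_eq_zero, ← Finset.sum_sub_distrib]
  rw [← hre]
  apply Finset.sum_congr rfl
  intro i _
  rw [hsymLa i, hsymb i]
  ring
end
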